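/- arXiv:2002.04424 — 2 statements merged into one kernel-verified Lean document; each statement's English description precedes it below -/
import Mathlib

section
/- Let τ and η be independent random variables with P(τ < t) = 1 − e^{−λt} (t ≥ 0) and η ≥ 0 with arbitrary distribution G, where q = P(τ < η) ∈ (0,1). Let (τ_i, η_i) be i.i.d. copies, ε_i = 1{τ_i < η_i}, ν = min{n : ε_n = 1}, and S_ν = Σ_{i=1}^ν min(τ_i, η_i). Then P(S_ν ≥ t) = e^{−λt} for all t ≥ 0; that is, S_ν is exponentially distributed with parameter λ. -/
open MeasureTheory ProbabilityTheory Set Filter Topology Function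
open scoped ENNReal

/-!
Let `F u = P(S_ν ≥ u)`. Conditioning on the first pair `(τ₁, η₁)`: a success ends the sum at
`τ₁`, while a failure contributes `η₁` and restarts an independent copy of the same sum. Hence
`F = K F` for the renewal operator `(K F)(u) = P(τ < η, u ≤ τ) + E[F(u - η); η ≤ τ]`. Since `K`
shrinks uniform distances by the factor `P(η ≤ τ) = 1 - q < 1`, it has at most one fixed point
bounded by `1`. By memorylessness the survival function `u ↦ P(τ ≥ u)` of `τ` is a fixed point
too, so `F` is the exponential survival function.
-/

lemma ProbabilityTheory.iIndepFun.indepFun_head_tail {Ω β : Type*} [MeasurableSpace Ω]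
    [MeasurableSpace β] {μ : Measure Ω} {X : ℕ → Ω → β} (hX : ∀ n, Measurable (X n))
    (h : iIndepFun X μ) : IndepFun (X 0) (fun ω n => X (n + 1) ω) μ := by
  rw [IndepFun_iff_Indep]
  have hsplit := indep_iSup_of_disjoint (fun n => (hX n).comap_le) h.iIndep
    (S := {0}) (T := Ioi 0) (by simp)
  refine indep_of_indep_of_le_right (indep_of_indep_of_le_left hsplit ?_) ?_
  · exact le_iSup₂_of_le 0 rfl le_rfl
  · set M := ⨆ i ∈ Ioi 0, MeasurableSpace.comap (X i) ‹_›
    have : Measurable[M] fun ω n => X (n + 1) ω :=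
      @measurable_pi_lambda Ω ℕ (fun _ => β) M _ _ fun n => measurable_iff_comap_le.2
        (le_biSup (fun i => MeasurableSpace.comap (X i) ‹_›) (mem_Ioi.2 n.succ_pos))
    exact this.comap_le

lemma ProbabilityTheory.iIndepFun.map_fun_eq_infinitePi_of_identDistrib {ι Ω β : Type*}
    [MeasurableSpace Ω] [MeasurableSpace β] {μ : Measure Ω} {X : ι → Ω → β}
    (hX : ∀ i, Measurable (X i)) (h : iIndepFun X μ) {j : ι}
    (hident : ∀ i, IdentDistrib (X i) (X j) μ μ) :
    μ.map (fun ω i => X i ω) = Measure.infinitePi fun _ => μ.map (X j) := by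
  rw [h.map_fun_eq_infinitePi_map hX]
  exact congrArg _ (funext fun i => (hident i).map_eq)

namespace MeasureTheory.Measure

variable {β : Type*} [MeasurableSpace β] (ρ : Measure β) [IsProbabilityMeasure ρ]

lemma infinitePi_map_head_tail :
    (infinitePi fun _ : ℕ => ρ).map (fun x => (x 0, fun n => x (n + 1))) =
      ρ.prod (infinitePi fun _ : ℕ => ρ) := by
  have hcoord : iIndepFun (fun n (x : ℕ → β) => x n) (infinitePi fun _ : ℕ => ρ) :=
    iIndepFun_infinitePi (X := fun _ => id) fun _ => measurable_id
  have htail : (infinitePi fun _ : ℕ => ρ).map (fun x n => x (n + 1)) =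
      infinitePi fun _ : ℕ => ρ := by
    rw [(hcoord.precomp Nat.succ_injective).map_fun_eq_infinitePi_map
      fun n => measurable_pi_apply _]
    simp [infinitePi_map_eval]
  rw [(indepFun_iff_map_prod_eq_prod_map_map (measurable_pi_apply 0).aemeasurable
    (measurable_pi_lambda _ fun n => measurable_pi_apply _).aemeasurable).1
    (hcoord.indepFun_head_tail fun n => measurable_pi_apply n), htail, infinitePi_map_eval]

lemma ae_exists_mem_infinitePi {s : Set β} (hs : MeasurableSet s) (hρ : ρ sᶜ < 1) :
    ∀ᵐ x ∂(infinitePi fun _ : ℕ => ρ), ∃ n, x n ∈ s := by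
  have hle : ∀ n, (infinitePi fun _ : ℕ => ρ) {x | ∀ m, x m ∉ s} ≤ ρ sᶜ ^ n := by
    intro n
    calc (infinitePi fun _ : ℕ => ρ) {x | ∀ m, x m ∉ s}
        ≤ (infinitePi fun _ : ℕ => ρ) ((Finset.range n : Set ℕ).pi fun _ => sᶜ) :=
          measure_mono fun x hx m _ => hx m
      _ = ρ sᶜ ^ n := by
          rw [infinitePi_pi (μ := fun _ : ℕ => ρ) (t := fun _ => sᶜ) fun _ _ => hs.compl,
            Finset.prod_const, Finset.card_range]
  rw [ae_iff]
  push Not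
  exact le_antisymm (ge_of_tendsto' (ENNReal.tendsto_pow_atTop_nhds_zero_of_lt_one hρ) hle)
    bot_le

end MeasureTheory.Measure

namespace GeometricStoppedSum

def successSet : Set (ℝ × ℝ) := {x | x.1 < x.2}

lemma mem_successSet {x : ℝ × ℝ} : x ∈ successSet ↔ x.1 < x.2 := Iff.rfl

lemma measurableSet_successSet : MeasurableSet successSet :=
  measurableSet_lt measurable_fst measurable_snd

/-- Sequences are indexed from `0` here; without any success, `firstSuccess x = sInf ∅ = 0`. -/
noncomputable def firstSuccess (x : ℕ → ℝ × ℝ) : ℕ := sInf {n | x n ∈ successSet}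

noncomputable def stoppedSum (x : ℕ → ℝ × ℝ) : ℝ :=
  ∑ i ∈ Finset.range (firstSuccess x + 1), min (x i).1 (x i).2

lemma firstSuccess_eq_iff (x : ℕ → ℝ × ℝ) (n : ℕ) :
    firstSuccess x = n ↔ (x n ∈ successSet ∧ ∀ m < n, x m ∉ successSet) ∨
      (n = 0 ∧ ∀ m, x m ∉ successSet) := by
  classical
  by_cases h : ∃ m, x m ∈ successSet
  · rw [firstSuccess, Nat.sInf_def (s := {m | x m ∈ successSet}) h, Nat.find_eq_iff]
    grind
  · push Not at h
    simp only [firstSuccess, h, ofPred_false, Nat.sInf_empty]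
    grind

lemma measurable_firstSuccess : Measurable firstSuccess := by
  refine measurable_to_countable' fun n => ?_
  have hs : ∀ m, MeasurableSet {x : ℕ → ℝ × ℝ | x m ∈ successSet} :=
    fun m => measurable_pi_apply m measurableSet_successSet
  simp only [preimage, mem_singleton_iff, firstSuccess_eq_iff, ofPred_or, ofPred_and,
    ofPred_forall]
  exact ((hs n).inter (.biInter (to_countable _) fun m _ => (hs m).compl)).union
    ((MeasurableSet.const _).inter (.iInter fun m => (hs m).compl))

lemma measurable_stoppedSum : Measurable stoppedSum := by
  have : Measurable fun p : (ℕ → ℝ × ℝ) × ℕ =>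
      ∑ i ∈ Finset.range (p.2 + 1), min (p.1 i).1 (p.1 i).2 :=
    measurable_from_prod_countable_left fun n =>
      Finset.measurable_sum (Finset.range (n + 1)) fun i _ =>
        ((measurable_pi_apply i).fst.min (measurable_pi_apply i).snd)
  exact this.comp (measurable_id.prodMk measurable_firstSuccess)

lemma stoppedSum_of_mem {x : ℕ → ℝ × ℝ} (h : x 0 ∈ successSet) : stoppedSum x = (x 0).1 := by
  have : firstSuccess x = 0 := (firstSuccess_eq_iff x 0).2 (.inl ⟨h, by simp⟩)
  simp [stoppedSum, this, min_eq_left (mem_successSet.1 h).le]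

lemma firstSuccess_of_notMem {x : ℕ → ℝ × ℝ} (h0 : x 0 ∉ successSet)
    (h : ∃ n, x n ∈ successSet) : firstSuccess x = firstSuccess (fun n => x (n + 1)) + 1 := by
  have hpos : 1 ≤ firstSuccess x := by
    rw [Nat.one_le_iff_ne_zero, Ne, firstSuccess_eq_iff]
    grind
  exact (Nat.sInf_add hpos).symm

lemma stoppedSum_of_notMem {x : ℕ → ℝ × ℝ} (h0 : x 0 ∉ successSet)
    (h : ∃ n, x n ∈ successSet) : stoppedSum x = (x 0).2 + stoppedSum (fun n => x (n + 1)) := by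
  rw [stoppedSum, firstSuccess_of_notMem h0 h, Finset.sum_range_succ', add_comm,
    min_eq_right (not_lt.1 h0), stoppedSum]

lemma sum_Icc_sInf_eq_stoppedSum (x : ℕ → ℝ × ℝ) (h : ∃ n, x (n + 1) ∈ successSet) :
    ∑ i ∈ Finset.Icc 1 (sInf {n | 1 ≤ n ∧ (x n).1 < (x n).2}), min (x i).1 (x i).2 =
      stoppedSum (fun n => x (n + 1)) := by
  obtain ⟨m, hm⟩ := h
  have hpos : 1 ≤ sInf {n | 1 ≤ n ∧ (x n).1 < (x n).2} :=
    (Nat.sInf_mem (s := {n | 1 ≤ n ∧ (x n).1 < (x n).2}) ⟨m + 1, by simp, hm⟩).1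
  rw [← Nat.sInf_add hpos]
  simp only [le_add_iff_nonneg_left, zero_le, true_and]
  rw [stoppedSum, firstSuccess, Finset.range_eq_Ico,
    Finset.sum_Ico_add' (fun i => min (x i).1 (x i).2),
    Finset.Ico_add_one_right_eq_Icc]
  rfl

lemma measure_le_sum_Icc_sInf_eq {Ω : Type*} [MeasurableSpace Ω] {μ : Measure Ω}
    {X : ℕ → Ω → ℝ × ℝ} (hX : ∀ n, Measurable (X n)) {ρ : Measure (ℝ × ℝ)}
    [IsProbabilityMeasure ρ] (hρ : ρ successSetᶜ < 1)
    (hlaw : μ.map (fun ω n => X (n + 1) ω) = Measure.infinitePi fun _ => ρ) (t : ℝ) :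
    μ {ω | t ≤ ∑ i ∈ Finset.Icc 1 (sInf {n | 1 ≤ n ∧ (X n ω).1 < (X n ω).2}),
      min (X i ω).1 (X i ω).2} = Measure.infinitePi (fun _ : ℕ => ρ) {x | t ≤ stoppedSum x} := by
  have hY : Measurable fun ω n => X (n + 1) ω := measurable_pi_lambda _ fun n => hX _
  have hsucc : ∀ᵐ ω ∂μ, ∃ n, X (n + 1) ω ∈ successSet := by
    have hmeas : MeasurableSet {x : ℕ → ℝ × ℝ | ∃ n, x n ∈ successSet} := by
      simp only [ofPred_exists]
      exact .iUnion fun n => measurable_pi_apply n measurableSet_successSet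
    have := Measure.ae_exists_mem_infinitePi ρ measurableSet_successSet hρ
    rwa [← hlaw, ae_map_iff hY.aemeasurable hmeas] at this
  rw [← hlaw, Measure.map_apply hY (measurableSet_le measurable_const measurable_stoppedSum)]
  refine measure_congr (eventuallyEq_set.2 (hsucc.mono fun ω hω => ?_))
  rw [mem_ofPred_eq, sum_Icc_sInf_eq_stoppedSum (fun n => X n ω) hω]
  rfl

/-- For a first pair `(τ, η) ∼ ρ` and an independent `T` with survival function `F`, this is
`P(Z ≥ u)` where `Z = τ` if `τ < η` and `Z = η + T` otherwise. -/
noncomputable def renewalOp (ρ : Measure (ℝ × ℝ)) (F : ℝ → ℝ≥0∞) (u : ℝ) : ℝ≥0∞ :=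
  ρ (successSet ∩ {x | u ≤ x.1}) + ∫⁻ x in successSetᶜ, F (u - x.2) ∂ρ

section Contraction

variable {ρ : Measure (ℝ × ℝ)}

lemma renewalOp_le_add {F G : ℝ → ℝ≥0∞} {c : ℝ≥0∞} (h : ∀ u, F u ≤ G u + c) (u : ℝ) :
    renewalOp ρ F u ≤ renewalOp ρ G u + ρ successSetᶜ * c := by
  rw [renewalOp, renewalOp, add_assoc]
  gcongr
  calc ∫⁻ x in successSetᶜ, F (u - x.2) ∂ρ
      ≤ ∫⁻ x in successSetᶜ, (G (u - x.2) + c) ∂ρ := lintegral_mono fun x => h _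
    _ = ∫⁻ x in successSetᶜ, G (u - x.2) ∂ρ + ρ successSetᶜ * c := by
      rw [lintegral_add_right _ measurable_const, setLIntegral_const, mul_comm]

lemma le_of_isFixedPt_renewalOp (hρ : ρ successSetᶜ < 1) {F G : ℝ → ℝ≥0∞}
    (hF : IsFixedPt (renewalOp ρ) F) (hG : IsFixedPt (renewalOp ρ) G)
    (hF1 : ∀ u, F u ≤ 1) : F ≤ G := by
  have key : ∀ n : ℕ, ∀ u, F u ≤ G u + ρ successSetᶜ ^ n := by
    intro n
    induction n with
    | zero => exact fun u => (hF1 u).trans (by simp)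
    | succ n ih =>
      intro u
      rw [← hF.eq, ← hG.eq, pow_succ']
      exact renewalOp_le_add ih u
  intro u
  have hlim : Tendsto (fun n => G u + ρ successSetᶜ ^ n) atTop (𝓝 (G u)) := by
    simpa using tendsto_const_nhds.add (ENNReal.tendsto_pow_atTop_nhds_zero_of_lt_one hρ)
  exact ge_of_tendsto' hlim fun n => key n u

lemma eq_of_isFixedPt_renewalOp (hρ : ρ successSetᶜ < 1) {F G : ℝ → ℝ≥0∞}
    (hF : IsFixedPt (renewalOp ρ) F) (hG : IsFixedPt (renewalOp ρ) G)
    (hF1 : ∀ u, F u ≤ 1) (hG1 : ∀ u, G u ≤ 1) : F = G :=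
  le_antisymm (le_of_isFixedPt_renewalOp hρ hF hG hF1) (le_of_isFixedPt_renewalOp hρ hG hF hG1)

end Contraction

section Memoryless

variable {ρτ : Measure ℝ} [IsProbabilityMeasure ρτ]

lemma measure_Ico_add_mul_measure_Ici (hτ0 : ρτ (Iio 0) = 0)
    (hmemoryless : ∀ a b, 0 ≤ a → 0 ≤ b → ρτ (Ici (a + b)) = ρτ (Ici a) * ρτ (Ici b))
    {u y : ℝ} (hy : 0 ≤ y) :
    ρτ (Ico u y) + ρτ (Ici y) * ρτ (Ici (u - y)) = ρτ (Ici u) := by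
  rcases le_or_gt y u with hyu | huy
  · rw [Ico_eq_empty (not_lt.2 hyu), measure_empty, zero_add,
      ← hmemoryless y (u - y) hy (by linarith), add_sub_cancel]
  · have h1 : ρτ (Ici (u - y)) = 1 := by
      refine le_antisymm prob_le_one ?_
      calc (1 : ℝ≥0∞) = ρτ (Ici 0) := by
            rw [← compl_Iio, prob_compl_eq_one_sub measurableSet_Iio, hτ0, tsub_zero]
        _ ≤ ρτ (Ici (u - y)) := measure_mono (Ici_subset_Ici.2 (by linarith))
    rw [h1, mul_one, ← Ico_union_Ici_eq_Ici huy.le,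
      measure_union (s₂ := Ici y) (fun _ h h' x hx => (h hx).2.not_ge (h' hx))
        measurableSet_Ici]

theorem isFixedPt_renewalOp_prod_of_memoryless {ρη : Measure ℝ} [IsProbabilityMeasure ρη]
    (hτ0 : ρτ (Iio 0) = 0)
    (hmemoryless : ∀ a b, 0 ≤ a → 0 ≤ b → ρτ (Ici (a + b)) = ρτ (Ici a) * ρτ (Ici b))
    (hη0 : ∀ᵐ y ∂ρη, 0 ≤ y) :
    IsFixedPt (renewalOp (ρτ.prod ρη)) fun u => ρτ (Ici u) := by
  funext u
  have hsucc : (ρτ.prod ρη) (successSet ∩ {x | u ≤ x.1}) = ∫⁻ y, ρτ (Ico u y) ∂ρη := by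
    rw [Measure.prod_apply_symm (measurableSet_successSet.inter
      (measurableSet_le measurable_const measurable_fst))]
    congr! 3 with y
    ext x
    simp [mem_successSet, and_comm]
  have hfail : ∫⁻ x in successSetᶜ, ρτ (Ici (u - x.2)) ∂(ρτ.prod ρη) =
      ∫⁻ y, ρτ (Ici y) * ρτ (Ici (u - y)) ∂ρη := by
    have hmeas : Measurable (successSetᶜ.indicator fun x : ℝ × ℝ => ρτ (Ici (u - x.2))) :=
      ((Antitone.measurable fun a b hab => measure_mono (Ici_subset_Ici.2 hab)).comp
        (measurable_const.sub measurable_snd)).indicator measurableSet_successSet.compl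
    rw [← lintegral_indicator measurableSet_successSet.compl,
      lintegral_prod_symm _ hmeas.aemeasurable]
    refine lintegral_congr fun y => ?_
    have : ∀ x, successSetᶜ.indicator (fun p : ℝ × ℝ => ρτ (Ici (u - p.2))) (x, y) =
        (Ici y).indicator (fun _ => ρτ (Ici (u - y))) x := by
      intro x
      classical
      simp [indicator_apply, mem_successSet]
    simp_rw [this, lintegral_indicator_const measurableSet_Ici, mul_comm]
  rw [renewalOp, hsucc, hfail, ← lintegral_add_left]
  · calc ∫⁻ y, ρτ (Ico u y) + ρτ (Ici y) * ρτ (Ici (u - y)) ∂ρη = ∫⁻ _, ρτ (Ici u) ∂ρη :=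
          lintegral_congr_ae
            (hη0.mono fun y hy => measure_Ico_add_mul_measure_Ici hτ0 hmemoryless hy)
      _ = ρτ (Ici u) := by simp
  · exact (Monotone.measurable fun a b hab => measure_mono (Ico_subset_Ico_right hab))

lemma measure_Ici_eq_ofReal_exp {lam : ℝ} (hlam : 0 ≤ lam)
    (h : ∀ t ≥ (0:ℝ), ρτ (Iio t) = ENNReal.ofReal (1 - Real.exp (-lam * t)))
    {t : ℝ} (ht : 0 ≤ t) : ρτ (Ici t) = ENNReal.ofReal (Real.exp (-lam * t)) := by
  have hexp : Real.exp (-lam * t) ≤ 1 := Real.exp_le_one_iff.2 (by nlinarith)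
  rw [← compl_Iio, prob_compl_eq_one_sub measurableSet_Iio, h t ht, ← ENNReal.ofReal_one,
    ← ENNReal.ofReal_sub _ (by linarith), sub_sub_cancel]

theorem isFixedPt_renewalOp_exp {lam : ℝ} (hlam : 0 ≤ lam)
    (h : ∀ t ≥ (0:ℝ), ρτ (Iio t) = ENNReal.ofReal (1 - Real.exp (-lam * t)))
    {ρη : Measure ℝ} [IsProbabilityMeasure ρη] (hη0 : ∀ᵐ y ∂ρη, 0 ≤ y) :
    IsFixedPt (renewalOp (ρτ.prod ρη)) fun u => ρτ (Ici u) := by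
  refine isFixedPt_renewalOp_prod_of_memoryless ((h 0 le_rfl).trans (by simp))
    (fun a b ha hb => ?_) hη0
  rw [measure_Ici_eq_ofReal_exp hlam h (add_nonneg ha hb), measure_Ici_eq_ofReal_exp hlam h ha,
    measure_Ici_eq_ofReal_exp hlam h hb, ← ENNReal.ofReal_mul (Real.exp_pos _).le,
    ← Real.exp_add, mul_add]

end Memoryless

theorem isFixedPt_renewalOp_stoppedSum (ρ : Measure (ℝ × ℝ)) [IsProbabilityMeasure ρ]
    (hρ : ρ successSetᶜ < 1) :
    IsFixedPt (renewalOp ρ) fun u =>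
      Measure.infinitePi (fun _ : ℕ => ρ) {x | u ≤ stoppedSum x} := by
  set P := Measure.infinitePi fun _ : ℕ => ρ
  funext u
  set A : Set (ℕ → ℝ × ℝ) := {x | x 0 ∈ successSet ∧ u ≤ (x 0).1}
  set E : Set ((ℝ × ℝ) × (ℕ → ℝ × ℝ)) := {p | p.1 ∉ successSet ∧ u ≤ p.1.2 + stoppedSum p.2}
  have hheadTail : Measurable fun x : ℕ → ℝ × ℝ => (x 0, fun n => x (n + 1)) := by fun_prop
  have hE : MeasurableSet E :=
    (measurableSet_successSet.compl.preimage measurable_fst).inter <| measurableSet_le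
      measurable_const (measurable_fst.snd.add (measurable_stoppedSum.comp measurable_snd))
  have hsplit : {x | u ≤ stoppedSum x} =ᵐ[P]
      (A ∪ (fun x => (x 0, fun n => x (n + 1))) ⁻¹' E : Set (ℕ → ℝ × ℝ)) := by
    rw [eventuallyEq_set]
    filter_upwards [Measure.ae_exists_mem_infinitePi ρ measurableSet_successSet hρ] with x hx
    by_cases h0 : x 0 ∈ successSet
    · simp [A, E, h0, stoppedSum_of_mem h0]
    · simp [A, E, h0, stoppedSum_of_notMem h0 hx]
  have hA : P A = ρ (successSet ∩ {x | u ≤ x.1}) :=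
    (measurePreserving_eval_infinitePi (μ := fun _ : ℕ => ρ) 0).measure_preimage
      (measurableSet_successSet.inter
        (measurableSet_le measurable_const measurable_fst)).nullMeasurableSet
  have hE' : P ((fun x => (x 0, fun n => x (n + 1))) ⁻¹' E) =
      ∫⁻ a in successSetᶜ, P {x | u - a.2 ≤ stoppedSum x} ∂ρ := by
    rw [← Measure.map_apply hheadTail hE, Measure.infinitePi_map_head_tail,
      Measure.prod_apply hE, ← lintegral_indicator measurableSet_successSet.compl]
    refine lintegral_congr fun a => ?_
    by_cases ha : a ∈ successSet
    · simp [E, ha]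
    · simp [E, P, ha, add_comm]
  show renewalOp ρ _ u = P {x | u ≤ stoppedSum x}
  rw [renewalOp, ← hA, ← hE', measure_congr hsplit,
    measure_union (fun _ h h' x hx => (h' hx).1 (h hx).1) (hE.preimage hheadTail)]

end GeometricStoppedSum

open GeometricStoppedSum

theorem geometric_sum_min_exponential_general
    {Ω : Type*} [MeasurableSpace Ω] (μ : Measure Ω) [IsProbabilityMeasure μ]
    (lam : ℝ) (hlam : 0 < lam)
    (τ η : ℕ → Ω → ℝ)
    (hmeas : ∀ i, Measurable fun ω => (τ i ω, η i ω))
    (hindep : iIndepFun (fun i ω => (τ i ω, η i ω)) μ)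
    (hident : ∀ i j, IdentDistrib (fun ω => (τ i ω, η i ω))
      (fun ω => (τ j ω, η j ω)) μ μ)
    (hpair : ∀ i, IndepFun (τ i) (η i) μ)
    (hτ : ∀ i, ∀ t ≥ (0:ℝ), μ {ω | τ i ω < t} = ENNReal.ofReal (1 - Real.exp (-lam * t)))
    (hηpos : ∀ i, 0 ≤ᵐ[μ] η i)
    (q : ℝ) (hq : ENNReal.ofReal q = μ {ω | τ 1 ω < η 1 ω})
    (hq0 : 0 < q)
    (ν : Ω → ℕ) (hν : ∀ ω, ν ω = sInf {n | 1 ≤ n ∧ τ n ω < η n ω})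
    (S : Ω → ℝ) (hS : ∀ ω, S ω = ∑ i ∈ Finset.Icc 1 (ν ω), min (τ i ω) (η i ω)) :
    ∀ t ≥ (0:ℝ), μ {ω | t ≤ S ω} = ENNReal.ofReal (Real.exp (-lam * t)) := by
  set ρ := μ.map fun ω => (τ 1 ω, η 1 ω)
  have hτm : Measurable (τ 1) := (hmeas 1).fst
  have hηm : Measurable (η 1) := (hmeas 1).snd
  have : IsProbabilityMeasure ρ := Measure.isProbabilityMeasure_map (hmeas 1).aemeasurable
  have : IsProbabilityMeasure (μ.map (τ 1)) := Measure.isProbabilityMeasure_map hτm.aemeasurable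
  have : IsProbabilityMeasure (μ.map (η 1)) := Measure.isProbabilityMeasure_map hηm.aemeasurable
  have hτlaw : ∀ t ≥ (0:ℝ), μ.map (τ 1) (Iio t) = ENNReal.ofReal (1 - Real.exp (-lam * t)) :=
    fun t ht => by rw [Measure.map_apply hτm measurableSet_Iio]; exact hτ 1 t ht
  have hfail : ρ successSetᶜ < 1 := by
    have hsucc : 0 < ρ successSet := by
      rw [Measure.map_apply (hmeas 1) measurableSet_successSet]
      exact hq ▸ ENNReal.ofReal_pos.2 hq0
    simpa using prob_compl_lt_one_sub_of_lt_prob hsucc measurableSet_successSet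
  have hρ : ρ = (μ.map (τ 1)).prod (μ.map (η 1)) :=
    (indepFun_iff_map_prod_eq_prod_map_map hτm.aemeasurable hηm.aemeasurable).1 (hpair 1)
  have hfix := eq_of_isFixedPt_renewalOp hfail (isFixedPt_renewalOp_stoppedSum ρ hfail)
    (hρ ▸ isFixedPt_renewalOp_exp hlam.le hτlaw
      ((ae_map_iff hηm.aemeasurable measurableSet_Ici).2 (hηpos 1)))
    (fun _ => prob_le_one) (fun _ => prob_le_one)
  have hlaw := (hindep.precomp Nat.succ_injective).map_fun_eq_infinitePi_of_identDistrib
    (fun n => hmeas _) (fun n => hident (n + 1) 1)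
  intro t ht
  simp_rw [hS, hν]
  rw [measure_le_sum_Icc_sInf_eq hmeas hfail hlaw, congrFun hfix t,
    measure_Ici_eq_ofReal_exp hlam.le hτlaw ht]

/-- for τ ~ Exp(λ) independent of η ≥ 0, with i.i.d. copies,
ε_i = 1{τ_i < η_i}, ν the first success, the sum S_ν = Σ_{i=1}^ν min(τ_i, η_i)
is exponential with parameter λ: P(S_ν ≥ t) = e^{−λt}. -/
theorem geometric_sum_min_exponential
    {Ω : Type*} [MeasurableSpace Ω] (μ : Measure Ω) [IsProbabilityMeasure μ]
    (lam : ℝ) (hlam : 0 < lam)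
    (τ η : ℕ → Ω → ℝ)
    (hmeas : ∀ i, Measurable fun ω => (τ i ω, η i ω))
    (hindep : iIndepFun (fun i ω => (τ i ω, η i ω)) μ)
    (hident : ∀ i j, IdentDistrib (fun ω => (τ i ω, η i ω))
      (fun ω => (τ j ω, η j ω)) μ μ)
    (hpair : ∀ i, IndepFun (τ i) (η i) μ)
    (hτ : ∀ i, ∀ t ≥ (0:ℝ), μ {ω | τ i ω < t} = ENNReal.ofReal (1 - Real.exp (-lam * t)))
    (hηpos : ∀ i, 0 ≤ᵐ[μ] η i)
    (q : ℝ) (hq : ENNReal.ofReal q = μ {ω | τ 1 ω < η 1 ω})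
    (hq0 : 0 < q) (hq1 : q < 1)
    (ν : Ω → ℕ) (hν : ∀ ω, ν ω = sInf {n | 1 ≤ n ∧ τ n ω < η n ω})
    (S : Ω → ℝ) (hS : ∀ ω, S ω = ∑ i ∈ Finset.Icc 1 (ν ω), min (τ i ω) (η i ω)) :
    ∀ t ≥ (0:ℝ), μ {ω | t ≤ S ω} = ENNReal.ofReal (Real.exp (-lam * t)) :=
  geometric_sum_min_exponential_general μ lam hlam τ η hmeas hindep hident hpair hτ hηpos q hq hq0 ν
    hν S hS
end

section
/- In the Geiger–Muller counter model with Poisson input of intensity λ and i.i.d. locking times with distribution G, let T be the time during which the counter loses no particles. Then the Laplace transform of T is φ(z) = λ(1 − φ_G(z+λ)) / (z + λ(1 − φ_G(z+λ))), where φ_G(z) = ∫_0^∞ e^{−zt} dG(t). -/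
/-!
The pairs `(τₖ, ηₖ)` are i.i.d. and `ν` is the first index with `τₖ < ηₖ`. On `{ν = n + 1}` the
weight `e^{-zT}` factors as `∏_{k ≤ n} e^{-zτₖ} 1{τₖ ≥ ηₖ} · e^{-zτₙ₊₁} 1{τₙ₊₁ < ηₙ₊₁}`, so by
independence `E e^{-zT} = ∑ₙ aⁿ b = b / (1 - a)` with `a = E[e^{-zτ}; τ ≥ η]` and
`b = E[e^{-zτ}; τ < η]`. Tilting `Exp(λ)` by `e^{-zx}` gives `λ/(λ+z) · Exp(λ+z)`, and
`P(Exp(λ+z) ≥ η) = φ_G(λ+z)`, whence `a = λ/(λ+z) φ_G(λ+z)` and `b = λ/(λ+z) (1 - φ_G(λ+z))`.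
Working with lower Lebesgue integrals makes the series manipulation unconditional.
-/

open MeasureTheory ProbabilityTheory Real Set

open scoped ENNReal

/-- As `sInf ∅ = 0`, the value `0` means that no `X k ω` with `k ≥ 1` lies in `A`. -/
noncomputable def firstHit {Ω α : Type*} (X : ℕ → Ω → α) (A : Set α) (ω : Ω) : ℕ :=
  sInf {k | 1 ≤ k ∧ X k ω ∈ A}

section FirstHit

variable {Ω α : Type*} {X : ℕ → Ω → α} {A : Set α} {ω : Ω}

lemma firstHit_eq_zero_iff : firstHit X A ω = 0 ↔ ∀ k, 1 ≤ k → X k ω ∉ A := by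
  simp [firstHit, Nat.sInf_eq_zero, Set.eq_empty_iff_forall_notMem]

lemma firstHit_eq_succ_iff {n : ℕ} :
    firstHit X A ω = n + 1 ↔ X (n + 1) ω ∈ A ∧ ∀ k ∈ Finset.Icc 1 n, X k ω ∉ A := by
  simp only [firstHit, Finset.mem_Icc]
  constructor
  · intro h
    have hne : {k | 1 ≤ k ∧ X k ω ∈ A}.Nonempty :=
      Set.nonempty_iff_ne_empty.mpr fun he => by simp [he] at h
    have hmem := Nat.sInf_mem hne
    rw [h] at hmem
    exact ⟨hmem.2, fun k hk hkA =>
      Nat.notMem_of_lt_sInf (s := {k | 1 ≤ k ∧ X k ω ∈ A}) (by omega) ⟨hk.1, hkA⟩⟩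
  · rintro ⟨hA, hbefore⟩
    have hmem := Nat.sInf_mem (s := {k | 1 ≤ k ∧ X k ω ∈ A}) ⟨n + 1, by omega, hA⟩
    refine le_antisymm (Nat.sInf_le ⟨by omega, hA⟩) (not_lt.mp fun hlt => ?_)
    exact hbefore _ ⟨hmem.1, by omega⟩ hmem.2

lemma indicator_firstHit_eq_succ (f : α → ℝ≥0∞) (n : ℕ) :
    {ω | firstHit X A ω = n + 1}.indicator
        (fun ω => ∏ k ∈ Finset.Icc 1 (firstHit X A ω), f (X k ω)) ω =
      ∏ k ∈ Finset.Icc 1 (n + 1),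
        (if k = n + 1 then A.indicator f else Aᶜ.indicator f) (X k ω) := by
  rw [Finset.prod_Icc_succ_top (by omega), if_pos rfl,
    Finset.prod_congr rfl fun k hk => by rw [if_neg (by simp at hk; omega)]]
  by_cases hω : firstHit X A ω = n + 1
  · obtain ⟨hA, hbefore⟩ := firstHit_eq_succ_iff.mp hω
    rw [indicator_of_mem (show ω ∈ {ω | firstHit X A ω = n + 1} from hω), hω,
      Finset.prod_Icc_succ_top (by omega), indicator_of_mem hA,
      Finset.prod_congr rfl fun k hk => indicator_of_mem (hbefore k hk) f]
  · rw [indicator_of_notMem (show ω ∉ {ω | firstHit X A ω = n + 1} from hω)]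
    rw [firstHit_eq_succ_iff, not_and_or, not_forall] at hω
    rcases hω with hA | ⟨k, hk⟩
    · rw [indicator_of_notMem hA, mul_zero]
    · obtain ⟨hk, hkA⟩ := Classical.not_imp.mp hk
      rw [Finset.prod_eq_zero hk (indicator_of_notMem hkA f), zero_mul]

variable [MeasurableSpace Ω] [MeasurableSpace α]

lemma measurable_firstHit (hX : ∀ k, Measurable (X k)) (hA : MeasurableSet A) :
    Measurable (firstHit X A) := by
  refine measurable_to_countable' fun n => ?_
  have hXA : ∀ k, Measurable fun ω => X k ω ∈ A := fun k => measurableSet_setOfPred.mp (hX k hA)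
  cases n with
  | zero =>
    simp only [preimage, mem_singleton_iff, firstHit_eq_zero_iff]
    exact measurableSet_setOfPred.mpr (.forall fun k => measurable_const.imp (hXA k).not)
  | succ n =>
    simp only [preimage, mem_singleton_iff, firstHit_eq_succ_iff]
    exact measurableSet_setOfPred.mpr
      ((hXA _).and (.forall fun k => measurable_const.imp (hXA k).not))

lemma measurableSet_firstHit_eq (hX : ∀ k, Measurable (X k)) (hA : MeasurableSet A) (n : ℕ) :
    MeasurableSet {ω | firstHit X A ω = n} :=
  measurable_firstHit hX hA (measurableSet_singleton n)

lemma measurable_prod_Icc_firstHit (hX : ∀ k, Measurable (X k)) (hA : MeasurableSet A)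
    {f : α → ℝ≥0∞} (hf : Measurable f) :
    Measurable fun ω => ∏ k ∈ Finset.Icc 1 (firstHit X A ω), f (X k ω) := by
  have hprod : Measurable fun q : Ω × ℕ => ∏ k ∈ Finset.Icc 1 q.2, f (X k q.1) :=
    measurable_from_prod_countable_left fun n =>
      Finset.measurable_fun_prod (Finset.Icc 1 n) fun k _ => hf.comp (hX k)
  exact hprod.comp (measurable_id.prodMk (measurable_firstHit hX hA))

variable {μ : Measure Ω} {P : Measure α}

lemma setLIntegral_firstHit_eq_succ (hX : ∀ k, Measurable (X k)) (hind : iIndepFun X μ)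
    (hlaw : ∀ k, μ.map (X k) = P) (hA : MeasurableSet A) {f : α → ℝ≥0∞} (hf : Measurable f)
    (n : ℕ) :
    ∫⁻ ω in {ω | firstHit X A ω = n + 1}, ∏ k ∈ Finset.Icc 1 (firstHit X A ω), f (X k ω) ∂μ =
      (∫⁻ x in Aᶜ, f x ∂P) ^ n * ∫⁻ x in A, f x ∂P := by
  set g : ℕ → α → ℝ≥0∞ := fun k => if k = n + 1 then A.indicator f else Aᶜ.indicator f
  have hg : ∀ k, Measurable (g k) := fun k => by
    by_cases hk : k = n + 1
    · simpa [g, hk] using hf.indicator hA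
    · simpa [g, hk] using hf.indicator hA.compl
  calc _ = ∫⁻ ω, ∏ k ∈ Finset.Icc 1 (n + 1), g k (X k ω) ∂μ := by
        rw [← lintegral_indicator (measurableSet_firstHit_eq hX hA (n + 1))]
        exact lintegral_congr fun ω => indicator_firstHit_eq_succ f n
    _ = ∏ k ∈ Finset.Icc 1 (n + 1), ∫⁻ x, g k x ∂P := by
        rw [lintegral_prod_eq_prod_lintegral_of_indepFun _ (fun k ω => g k (X k ω))
          (hind.comp g hg) fun k => (hg k).comp (hX k)]
        exact Finset.prod_congr rfl fun k _ => by rw [← hlaw k, lintegral_map (hg k) (hX k)]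
    _ = _ := by
        rw [Finset.prod_Icc_succ_top (by omega), Finset.prod_congr rfl fun k hk => by
          rw [show g k = Aᶜ.indicator f from if_neg (by simp at hk; omega)]]
        simp [g, lintegral_indicator hA, lintegral_indicator hA.compl]

lemma lintegral_prod_Icc_firstHit (hX : ∀ k, Measurable (X k)) (hind : iIndepFun X μ)
    (hlaw : ∀ k, μ.map (X k) = P) (hA : MeasurableSet A) {f : α → ℝ≥0∞} (hf : Measurable f) :
    ∫⁻ ω, ∏ k ∈ Finset.Icc 1 (firstHit X A ω), f (X k ω) ∂μ =
      μ {ω | firstHit X A ω = 0} + (∫⁻ x in A, f x ∂P) * (1 - ∫⁻ x in Aᶜ, f x ∂P)⁻¹ := by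
  have hzero : ∫⁻ ω in {ω | firstHit X A ω = 0},
      ∏ k ∈ Finset.Icc 1 (firstHit X A ω), f (X k ω) ∂μ = μ {ω | firstHit X A ω = 0} := by
    rw [setLIntegral_congr_fun (measurableSet_firstHit_eq hX hA 0) (g := 1)
      fun ω hω => by simp [show firstHit X A ω = 0 from hω]]
    simp
  have hcover : (⋃ n, {ω | firstHit X A ω = n}) = univ :=
    iUnion_eq_univ_iff.mpr fun ω => ⟨_, rfl⟩
  rw [← setLIntegral_univ, ← hcover, lintegral_iUnion (measurableSet_firstHit_eq hX hA)
      (pairwise_disjoint_fiber _), tsum_eq_zero_add' ENNReal.summable, hzero]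
  simp_rw [setLIntegral_firstHit_eq_succ hX hind hlaw hA hf, ENNReal.tsum_mul_right,
    ENNReal.tsum_geometric, mul_comm]

lemma measure_setOf_firstHit_eq_zero (hX : ∀ k, Measurable (X k)) (hind : iIndepFun X μ)
    (hlaw : ∀ k, μ.map (X k) = P) (hA : MeasurableSet A) (hPA : P A ≠ 0) :
    μ {ω | firstHit X A ω = 0} = 0 := by
  have := hind.isProbabilityMeasure
  have : IsProbabilityMeasure P := hlaw 0 ▸ Measure.isProbabilityMeasure_map (hX 0).aemeasurable
  -- For `f = 1` the left side is `1` and the geometric series already sums to `P A / P A = 1`.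
  have h := lintegral_prod_Icc_firstHit hX hind hlaw hA (f := 1) measurable_const
  simp only [Pi.one_apply, Finset.prod_const_one, lintegral_const, measure_univ, one_mul,
    Measure.restrict_apply_univ] at h
  rw [prob_compl_eq_one_sub hA, ENNReal.sub_sub_cancel ENNReal.one_ne_top prob_le_one,
    ENNReal.mul_inv_cancel hPA (measure_ne_top P A)] at h
  exact (ENNReal.add_left_inj ENNReal.one_ne_top).mp (h.symm.trans (zero_add 1).symm)

end FirstHit

section ExponentialLaw

variable {r z : ℝ}

lemma expMeasure_Iio (hr : 0 < r) (y : ℝ) :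
    expMeasure r (Iio y) = ENNReal.ofReal (1 - exp (-(r * y))) := by
  have := isProbabilityMeasure_expMeasure hr
  have hy : expMeasure r {y} = 0 :=
    withDensity_absolutelyContinuous _ _ (Real.volume_singleton (a := y))
  rw [measure_congr (Iio_ae_eq_Iic' hy), ← ofReal_cdf, cdf_expMeasure_eq hr]
  split_ifs with h
  · rfl
  · rw [ENNReal.ofReal_zero,
      ENNReal.ofReal_of_nonpos (by rw [sub_nonpos, one_le_exp_iff]; nlinarith)]

lemma expMeasure_Ici (hr : 0 < r) {y : ℝ} (hy : 0 ≤ y) :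
    expMeasure r (Ici y) = ENNReal.ofReal (exp (-(r * y))) := by
  have := isProbabilityMeasure_expMeasure hr
  have hexp : exp (-(r * y)) ≤ 1 := exp_le_one_iff.mpr (by nlinarith)
  rw [← compl_Iio, prob_compl_eq_one_sub measurableSet_Iio, expMeasure_Iio hr, ← ENNReal.ofReal_one,
    ← ENNReal.ofReal_sub _ (by linarith), sub_sub_cancel]

lemma map_eq_expMeasure {Ω : Type*} [MeasurableSpace Ω] {μ : Measure Ω} [IsProbabilityMeasure μ]
    {X : Ω → ℝ} (hr : 0 < r) (hX : Measurable X)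
    (hcdf : ∀ t ≥ 0, μ {ω | X ω < t} = ENNReal.ofReal (1 - exp (-(r * t)))) :
    μ.map X = expMeasure r := by
  have := isProbabilityMeasure_expMeasure hr
  have := Measure.isProbabilityMeasure_map (μ := μ) hX.aemeasurable
  refine Measure.ext_of_Ici _ _ fun t => ?_
  rw [← compl_Iio, prob_compl_eq_one_sub measurableSet_Iio, prob_compl_eq_one_sub measurableSet_Iio,
    Measure.map_apply hX measurableSet_Iio, expMeasure_Iio hr]
  congr 1
  rcases le_or_gt 0 t with ht | ht
  · exact hcdf t ht
  · have hneg : μ {ω | X ω < 0} = 0 := by simpa using hcdf 0 le_rfl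
    rw [measure_mono_null (s := X ⁻¹' Iio t) (fun ω (hω : X ω < t) => show X ω < 0 by linarith)
      hneg, ENNReal.ofReal_of_nonpos (by rw [sub_nonpos, one_le_exp_iff]; nlinarith)]

lemma map_prodMk_eq_expMeasure_prod {Ω : Type*} [MeasurableSpace Ω] {μ : Measure Ω}
    [IsProbabilityMeasure μ] {X Y : Ω → ℝ} (hr : 0 < r) (hX : Measurable X) (hY : Measurable Y)
    (hXY : IndepFun X Y μ)
    (hcdf : ∀ t ≥ 0, μ {ω | X ω < t} = ENNReal.ofReal (1 - exp (-(r * t)))) :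
    μ.map (fun ω => (X ω, Y ω)) = (expMeasure r).prod (μ.map Y) := by
  rw [← map_eq_expMeasure hr hX hcdf]
  exact (indepFun_iff_map_prod_eq_prod_map_map hX.aemeasurable hY.aemeasurable).mp hXY

lemma withDensity_exp_expMeasure (hr : 0 < r) (hrz : 0 < r + z) :
    (expMeasure r).withDensity (fun x => ENNReal.ofReal (exp (-(z * x)))) =
      ENNReal.ofReal (r / (r + z)) • expMeasure (r + z) := by
  have hpdf : ∀ s, expMeasure s = volume.withDensity (exponentialPDF s) := fun _ => rfl
  have hpdfm : ∀ s, Measurable (exponentialPDF s) := fun s =>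
    (measurable_exponentialPDFReal s).ennreal_ofReal
  rw [hpdf, hpdf, ← withDensity_mul _ (hpdfm r) (by fun_prop), ← withDensity_smul _ (hpdfm _)]
  congr 1
  funext x
  simp only [Pi.mul_apply, Pi.smul_apply, smul_eq_mul, exponentialPDF_eq]
  split_ifs with hx
  · rw [← ENNReal.ofReal_mul (by positivity), ← ENNReal.ofReal_mul (by positivity), mul_assoc,
      ← exp_add]
    congr 1
    field_simp
    ring_nf
  · simp

end ExponentialLaw

section CounterCycle

variable {G : Measure ℝ} {c r z : ℝ}

lemma integrable_exp_neg_mul [IsFiniteMeasure G] (hG : ∀ᵐ y ∂G, 0 ≤ y) (hc : 0 ≤ c) :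
    Integrable (fun y => exp (-(c * y))) G :=
  Integrable.of_bound (by fun_prop) 1 <| by
    filter_upwards [hG] with y hy
    rw [norm_of_nonneg (exp_pos _).le, exp_le_one_iff]
    nlinarith

lemma integral_exp_neg_mul_le_one [IsProbabilityMeasure G] (hG : ∀ᵐ y ∂G, 0 ≤ y) (hc : 0 ≤ c) :
    ∫ y, exp (-(c * y)) ∂G ≤ 1 := by
  refine (integral_mono_ae (integrable_exp_neg_mul hG hc) (integrable_const 1) ?_).trans_eq
    (by simp)
  filter_upwards [hG] with y hy
  exact exp_le_one_iff.mpr (by nlinarith)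

lemma expMeasure_prod_compl_setOf_lt [IsFiniteMeasure G] (hc : 0 < c) (hG : ∀ᵐ y ∂G, 0 ≤ y) :
    (expMeasure c).prod G {p : ℝ × ℝ | p.1 < p.2}ᶜ = ENNReal.ofReal (∫ y, exp (-(c * y)) ∂G) := by
  have := isProbabilityMeasure_expMeasure hc
  rw [Measure.prod_apply_symm (measurableSet_lt measurable_fst measurable_snd).compl,
    ofReal_integral_eq_lintegral_ofReal (integrable_exp_neg_mul hG hc.le)
      (ae_of_all _ fun y => (exp_pos _).le)]
  refine lintegral_congr_ae ?_
  filter_upwards [hG] with y hy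
  rw [← expMeasure_Ici hc hy, ← compl_Iio]
  rfl

lemma expMeasure_prod_setOf_lt [IsProbabilityMeasure G] (hc : 0 < c) (hG : ∀ᵐ y ∂G, 0 ≤ y) :
    (expMeasure c).prod G {p : ℝ × ℝ | p.1 < p.2} =
      ENNReal.ofReal (1 - ∫ y, exp (-(c * y)) ∂G) := by
  have := isProbabilityMeasure_expMeasure hc
  rw [← compl_compl {p : ℝ × ℝ | p.1 < p.2},
    prob_compl_eq_one_sub (measurableSet_lt measurable_fst measurable_snd).compl,
    expMeasure_prod_compl_setOf_lt hc hG,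
    ENNReal.ofReal_sub _ (integral_nonneg fun _ => (exp_pos _).le), ENNReal.ofReal_one]

lemma expMeasure_prod_setOf_lt_ne_zero [IsProbabilityMeasure G] (hc : 0 < c)
    (hG : ∀ᵐ y ∂G, 0 < y) : (expMeasure c).prod G {p : ℝ × ℝ | p.1 < p.2} ≠ 0 := by
  have := isProbabilityMeasure_expMeasure hc
  have hmeas : MeasurableSet {p : ℝ × ℝ | p.1 < p.2} :=
    measurableSet_lt measurable_fst measurable_snd
  rw [Measure.prod_apply_symm hmeas, ne_eq,
    lintegral_eq_zero_iff (measurable_measure_prodMk_right hmeas)]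
  intro h0
  obtain ⟨y, hy0, hy⟩ := (h0.and hG).exists
  change expMeasure c (Iio y) = 0 at hy0
  rw [expMeasure_Iio hc, ENNReal.ofReal_eq_zero, sub_nonpos, one_le_exp_iff] at hy0
  nlinarith

lemma setLIntegral_exp_fst_expMeasure_prod [SFinite G] (hr : 0 < r) (hrz : 0 < r + z)
    {S : Set (ℝ × ℝ)} (hS : MeasurableSet S) :
    ∫⁻ p in S, ENNReal.ofReal (exp (-(z * p.1))) ∂(expMeasure r).prod G =
      ENNReal.ofReal (r / (r + z)) * (expMeasure (r + z)).prod G S := by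
  have := isProbabilityMeasure_expMeasure hr
  rw [← withDensity_apply _ hS,
    ← prod_withDensity_left (f := fun x => ENNReal.ofReal (exp (-(z * x)))) (by fun_prop),
    withDensity_exp_expMeasure hr hrz, Measure.prod_smul_left, Measure.smul_apply, smul_eq_mul]

end CounterCycle

lemma toReal_ofReal_mul_inv_one_sub_ofReal {a b : ℝ} (ha : 0 ≤ a) (hb : 0 ≤ b) (hb1 : b < 1) :
    (ENNReal.ofReal a * (1 - ENNReal.ofReal b)⁻¹).toReal = a / (1 - b) := by
  rw [← ENNReal.ofReal_one, ← ENNReal.ofReal_sub _ hb, ← ENNReal.ofReal_inv_of_pos (by linarith),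
    ← ENNReal.ofReal_mul ha, ← div_eq_mul_inv, ENNReal.toReal_ofReal (div_nonneg ha (by linarith))]

theorem geiger_laplace_transform_general
    {Ω : Type*} [MeasurableSpace Ω] (μ : Measure Ω) [IsProbabilityMeasure μ]
    (lam : ℝ) (hlam : 0 < lam)
    (G : Measure ℝ) [IsProbabilityMeasure G] (hG0 : G (Set.Iic 0) = 0)
    (τ η : ℕ → Ω → ℝ)
    (hmeas : ∀ i, Measurable fun ω => (τ i ω, η i ω))
    (hindep : iIndepFun (fun i ω => (τ i ω, η i ω)) μ)
    (hseq : IndepFun (fun ω i => τ i ω) (fun ω i => η i ω) μ)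
    (hτ : ∀ i, ∀ t ≥ (0:ℝ),
      μ {ω | τ i ω < t} = ENNReal.ofReal (1 - Real.exp (-lam * t)))
    (hη : ∀ i, Measure.map (η i) μ = G)
    (ν : Ω → ℕ) (hν : ∀ ω, ν ω = sInf {k | 1 ≤ k ∧ τ k ω < η k ω})
    (T : Ω → ℝ) (hT : ∀ ω, T ω = ∑ i ∈ Finset.Icc 1 (ν ω), τ i ω)
    (φG : ℝ → ℝ) (hφG : ∀ s, φG s = ∫ x, Real.exp (-s * x) ∂G) :
    ∀ z > 0, ∫ ω, Real.exp (-z * T ω) ∂μ =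
      lam * (1 - φG (z + lam)) / (z + lam * (1 - φG (z + lam))) := by
  intro z hz
  set X : ℕ → Ω → ℝ × ℝ := fun k ω => (τ k ω, η k ω)
  set A : Set (ℝ × ℝ) := {p | p.1 < p.2}
  set f : ℝ × ℝ → ℝ≥0∞ := fun p => ENNReal.ofReal (exp (-(z * p.1)))
  set φ := ∫ y, exp (-((lam + z) * y)) ∂G
  have hlz : 0 < lam + z := by linarith
  have hA : MeasurableSet A := measurableSet_lt measurable_fst measurable_snd
  have hG : ∀ᵐ y ∂G, 0 < y := ae_iff.mpr (measure_mono_null (fun y hy => not_lt.mp hy) hG0)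
  have hG' : ∀ᵐ y ∂G, 0 ≤ y := hG.mono fun _ => le_of_lt
  have hlaw : ∀ k, μ.map (X k) = (expMeasure lam).prod G := fun k => hη k ▸
    map_prodMk_eq_expMeasure_prod hlam (hmeas k).fst (hmeas k).snd
      (hseq.comp (measurable_pi_apply k) (measurable_pi_apply k))
      fun t ht => by rw [hτ k t ht, neg_mul]
  have hTf : ∀ ω, exp (-z * T ω) = (∏ k ∈ Finset.Icc 1 (firstHit X A ω), f (X k ω)).toReal :=
    fun ω => by
      rw [hT, show ν ω = firstHit X A ω from hν ω, ENNReal.toReal_prod, Finset.mul_sum, exp_sum]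
      exact Finset.prod_congr rfl fun k _ => by rw [ENNReal.toReal_ofReal (exp_pos _).le, neg_mul]
  have hφ1 : φ ≤ 1 := integral_exp_neg_mul_le_one hG' hlz.le
  have hlt : lam / (lam + z) * φ < 1 :=
    (mul_le_of_le_one_right (by positivity) hφ1).trans_lt
      ((div_lt_one hlz).mpr (by linarith))
  calc ∫ ω, exp (-z * T ω) ∂μ
      = (∫⁻ ω, ∏ k ∈ Finset.Icc 1 (firstHit X A ω), f (X k ω) ∂μ).toReal := by
        simp_rw [hTf]
        exact integral_toReal (measurable_prod_Icc_firstHit hmeas hA (by fun_prop)).aemeasurable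
          (ae_of_all _ fun ω => ENNReal.prod_lt_top fun k _ => ENNReal.ofReal_lt_top)
    _ = (ENNReal.ofReal (lam / (lam + z) * (1 - φ)) *
          (1 - ENNReal.ofReal (lam / (lam + z) * φ))⁻¹).toReal := by
        rw [lintegral_prod_Icc_firstHit hmeas hindep hlaw hA (by fun_prop),
          measure_setOf_firstHit_eq_zero hmeas hindep hlaw hA
            (expMeasure_prod_setOf_lt_ne_zero hlam hG), zero_add,
          setLIntegral_exp_fst_expMeasure_prod hlam hlz hA,
          setLIntegral_exp_fst_expMeasure_prod hlam hlz hA.compl, expMeasure_prod_setOf_lt hlz hG',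
          expMeasure_prod_compl_setOf_lt hlz hG', ← ENNReal.ofReal_mul (by positivity),
          ← ENNReal.ofReal_mul (by positivity)]
    _ = lam * (1 - φG (z + lam)) / (z + lam * (1 - φG (z + lam))) := by
        rw [toReal_ofReal_mul_inv_one_sub_ofReal (mul_nonneg (by positivity) (by linarith))
          (by positivity) hlt, show φG (z + lam) = φ by simp only [hφG, neg_mul, add_comm z lam, φ]]
        field_simp
        ring

/-- Geiger–Muller counter with Poisson(λ) input and i.i.d.
locking times with law G: the Laplace transform of the time T until the first
lost particle is φ(z) = λ(1 − φ_G(z+λ)) / (z + λ(1 − φ_G(z+λ))). -/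
theorem geiger_laplace_transform
    {Ω : Type*} [MeasurableSpace Ω] (μ : Measure Ω) [IsProbabilityMeasure μ]
    (lam : ℝ) (hlam : 0 < lam)
    (G : Measure ℝ) [IsProbabilityMeasure G] (hG0 : G (Set.Iic 0) = 0)
    (τ η : ℕ → Ω → ℝ)
    (hmeas : ∀ i, Measurable fun ω => (τ i ω, η i ω))
    (hindep : iIndepFun (fun i ω => (τ i ω, η i ω)) μ)
    (hident : ∀ i j, IdentDistrib (fun ω => (τ i ω, η i ω))
      (fun ω => (τ j ω, η j ω)) μ μ)
    (hseq : IndepFun (fun ω i => τ i ω) (fun ω i => η i ω) μ)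
    (hτ : ∀ i, ∀ t ≥ (0:ℝ),
      μ {ω | τ i ω < t} = ENNReal.ofReal (1 - Real.exp (-lam * t)))
    (hη : ∀ i, Measure.map (η i) μ = G)
    (ν : Ω → ℕ) (hν : ∀ ω, ν ω = sInf {k | 1 ≤ k ∧ τ k ω < η k ω})
    (T : Ω → ℝ) (hT : ∀ ω, T ω = ∑ i ∈ Finset.Icc 1 (ν ω), τ i ω)
    (φG : ℝ → ℝ) (hφG : ∀ s, φG s = ∫ x, Real.exp (-s * x) ∂G) :
    ∀ z > 0, ∫ ω, Real.exp (-z * T ω) ∂μ =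
      lam * (1 - φG (z + lam)) / (z + lam * (1 - φG (z + lam))) :=
  geiger_laplace_transform_general μ lam hlam G hG0 τ η hmeas hindep hseq hτ hη ν hν T hT φG hφG
end
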